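/- arXiv:1311.2444 — 4 statements merged into one kernel-verified Lean document; each statement's English description precedes it below -/
import Mathlib

section
/- Let F : ℝ^n → ℝ be differentiable, g : ℝ^n → ℝ convex, τ > 0, y ∈ X with X convex closed, and let x̂(y) be the unique minimizer over X of x ↦ F(y) + ∇F(y)ᵀ(x - y) + (τ/2)‖x - y‖² + g(x). Then (x̂(y) - y)ᵀ∇F(y) + g(x̂(y)) - g(y) ≤ -τ‖x̂(y) - y‖². -/
open scoped RealInnerProductSpace

/-- Descent property of the proximal-linearized best response:
if `x̂(y)` minimizes `x ↦ F(y) + ∇F(y)ᵀ(x-y) + (τ/2)‖x-y‖² + g(x)` over `X`, then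
`(x̂(y) - y)ᵀ∇F(y) + g(x̂(y)) - g(y) ≤ -τ‖x̂(y) - y‖²`. -/
theorem stmt2 {n : ℕ} (X : Set (EuclideanSpace ℝ (Fin n)))
    (hXne : X.Nonempty) (hXcl : IsClosed X) (hXcv : Convex ℝ X)
    (F g : EuclideanSpace ℝ (Fin n) → ℝ) (τ : ℝ) (hτ : 0 < τ)
    (hF : Differentiable ℝ F)
    (hg : ConvexOn ℝ Set.univ g) (hgc : Continuous g)
    (y : EuclideanSpace ℝ (Fin n)) (hy : y ∈ X)
    (xhat : EuclideanSpace ℝ (Fin n)) (hxhatX : xhat ∈ X)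
    (hmin : ∀ x ∈ X,
      F y + ⟪gradient F y, xhat - y⟫ + τ / 2 * ‖xhat - y‖ ^ 2 + g xhat ≤
        F y + ⟪gradient F y, x - y⟫ + τ / 2 * ‖x - y‖ ^ 2 + g x) :
    ⟪xhat - y, gradient F y⟫ + g xhat - g y ≤ -τ * ‖xhat - y‖ ^ 2 := by
  set d := xhat - y with hd
  set B := ‖d‖ ^ 2 with hB
  set A := ⟪xhat - y, gradient F y⟫ + g xhat - g y with hA
  have key : ∀ t ∈ Set.Ico (0:ℝ) 1, A ≤ -(τ/2) * (1 + t) * B := by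
    intro t ht
    obtain ⟨ht0, ht1⟩ := ht
    have hxt : y + t • d ∈ X := by
      have := hXcv hy hxhatX (a := 1 - t) (b := t) (by linarith) ht0 (by ring)
      convert this using 1
      rw [hd]
      module
    have h1 := hmin _ hxt
    have hin : ⟪gradient F y, (y + t • d) - y⟫ = t * ⟪gradient F y, d⟫ := by
      simp [inner_smul_right]
    have hnm : ‖(y + t • d) - y‖ ^ 2 = t ^ 2 * B := by
      have : (y + t • d) - y = t • d := by abel
      rw [this, norm_smul, hB]
      simp [abs_of_nonneg ht0]
      ring
    have hgt : g (y + t • d) ≤ (1 - t) * g y + t * g xhat := by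
      have := hg.2 (Set.mem_univ y) (Set.mem_univ xhat)
        (show (0:ℝ) ≤ 1 - t by linarith) ht0 (by ring)
      have heq : (1 - t) • y + t • xhat = y + t • d := by rw [hd]; module
      rw [heq] at this
      simpa using this
    rw [hin, hnm] at h1
    have hsym : ⟪xhat - y, gradient F y⟫ = ⟪gradient F y, d⟫ := by
      rw [hd, real_inner_comm]
    have h2 : (1 - t) * A ≤ (1 - t) * (-(τ/2) * (1 + t) * B) := by
      rw [hA, hsym]
      nlinarith [h1, hgt]
    exact le_of_mul_le_mul_left h2 (by linarith)
  have hne : (nhdsWithin (1:ℝ) (Set.Ico 0 1)).NeBot := by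
    apply mem_closure_iff_nhdsWithin_neBot.mp
    rw [closure_Ico (by norm_num : (0:ℝ) ≠ 1)]
    exact Set.right_mem_Icc.mpr (by norm_num)
  have hlim : Filter.Tendsto (fun t : ℝ => -(τ/2) * (1 + t) * B)
      (nhdsWithin 1 (Set.Ico 0 1)) (nhds (-τ * B)) := by
    have hc : Continuous fun t : ℝ => -(τ/2) * (1 + t) * B := by continuity
    have h2 : Filter.Tendsto (fun t : ℝ => -(τ/2) * (1 + t) * B)
        (nhdsWithin 1 (Set.Ico 0 1)) (nhds (-(τ/2) * (1 + 1) * B)) :=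
      (hc.tendsto 1).mono_left nhdsWithin_le_nhds
    convert h2 using 2
    ring
  exact ge_of_tendsto hlim (eventually_nhdsWithin_of_forall key)
end

section
/- Let P(·;·) : X × X → ℝ be such that P(·;w) is convex differentiable for each w, with ∇P(y;y) = ∇F(y) for all y ∈ X (gradient consistency). Let τ > 0 and x̂(y) be the unique minimizer over X of x ↦ P(x;y) + (τ/2)(x - y)ᵀQ(x - y) + g(x), with Q positive definite with smallest eigenvalue q > 0, and g convex. Then (y - x̂(y))ᵀ∇F(y) + g(y) - g(x̂(y)) ≥ qτ‖x̂(y) - y‖². -/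
/-!
Write `d = x̂ - y`. Since `x̂` minimizes the convex function `P(·;y) + g` plus the quadratic
`(τ/2)⟪x - y, Q(x - y)⟫` over `X`, comparing with the points of the segment `[x̂, y]` and letting
them tend to `x̂` gives `P(x̂;y) + g(x̂) + τ⟪d, Q d⟫ ≤ P(y;y) + g(y)`. The gradient inequality for
the convex `P(·;y)` together with gradient consistency gives `⟪∇F(y), d⟫ ≤ P(x̂;y) - P(y;y)`.
Adding the two and using `⟪d, Q d⟫ ≥ q‖d‖²` yields the claim.
-/

open scoped RealInnerProductSpace
open Filter Topology Set

theorem ConvexOn.fderiv_apply_sub_le {E : Type*} [NormedAddCommGroup E] [NormedSpace ℝ E]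
    {s : Set E} {f : E → ℝ} {x y : E} (hf : ConvexOn ℝ s f) (hx : x ∈ s) (hy : y ∈ s)
    (hd : DifferentiableAt ℝ f x) :
    fderiv ℝ f x (y - x) ≤ f y - f x := by
  set γ : ℝ →ᵃ[ℝ] E := AffineMap.lineMap x y
  have hsegment : ConvexOn ℝ (Icc 0 1) (f ∘ γ) :=
    (hf.comp_affineMap γ).subset (fun t ht => hf.1.lineMap_mem hx hy ht) (convex_Icc 0 1)
  have hderiv : HasDerivAt (f ∘ γ) (fderiv ℝ f x (y - x)) 0 := by
    have hγ : HasDerivAt γ (y - x) 0 := AffineMap.hasDerivAt_lineMap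
    have hfγ : HasFDerivAt f (fderiv ℝ f x) (γ 0) := by simpa [γ] using hd.hasFDerivAt
    simpa using hfγ.comp_hasDerivAt 0 hγ
  simpa [slope_def_field, γ] using
    hsegment.le_slope_of_hasDerivAt (by simp) (by simp) zero_lt_one hderiv

theorem le_of_forall_mem_Ioc_le_add_mul {a b k : ℝ} (h : ∀ t ∈ Ioc (0 : ℝ) 1, a ≤ b + t * k) :
    a ≤ b := by
  have hlim : Tendsto (fun t : ℝ => b + t * k) (𝓝[>] 0) (𝓝 b) :=
    tendsto_nhdsWithin_of_tendsto_nhds (Continuous.tendsto' (by fun_prop) 0 b (by simp))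
  exact ge_of_tendsto hlim (eventually_of_mem (Ioc_mem_nhdsGT zero_lt_one) h)

theorem ConvexOn.mul_inner_le_sub_of_isMinOn_add_quadratic {E : Type*} [NormedAddCommGroup E]
    [InnerProductSpace ℝ E] {X : Set E} {φ : E → ℝ} (hφ : ConvexOn ℝ X φ) (Q : E →ₗ[ℝ] E)
    (τ : ℝ) {y x₀ : E} (hy : y ∈ X) (hx₀ : x₀ ∈ X)
    (hmin : IsMinOn (fun x => φ x + τ / 2 * ⟪x - y, Q (x - y)⟫) X x₀) :
    τ * ⟪x₀ - y, Q (x₀ - y)⟫ ≤ φ y - φ x₀ := by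
  set c := ⟪x₀ - y, Q (x₀ - y)⟫
  refine le_of_forall_mem_Ioc_le_add_mul (k := τ / 2 * c) fun t ⟨ht₀, ht₁⟩ => ?_
  have h1t : 0 ≤ 1 - t := sub_nonneg.2 ht₁
  set xₜ := (1 - t) • x₀ + t • y
  have hquad : ⟪xₜ - y, Q (xₜ - y)⟫ = (1 - t) ^ 2 * c := by
    have : xₜ - y = (1 - t) • (x₀ - y) := by module
    rw [this, map_smul, real_inner_smul_left, real_inner_smul_right]
    ring
  have hle : φ x₀ + τ / 2 * c ≤ φ xₜ + τ / 2 * ((1 - t) ^ 2 * c) :=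
    hquad ▸ hmin (hφ.1 hx₀ hy h1t ht₀.le (by ring))
  have hconv : φ xₜ ≤ (1 - t) * φ x₀ + t * φ y := hφ.2 hx₀ hy h1t ht₀.le (by ring)
  have : t * (τ * c) ≤ t * (φ y - φ x₀ + t * (τ / 2 * c)) := by linarith
  exact le_of_mul_le_mul_left this ht₀

theorem stmt3_general {n : ℕ} (X : Set (EuclideanSpace ℝ (Fin n)))
    (hXcv : Convex ℝ X)
    (F g : EuclideanSpace ℝ (Fin n) → ℝ)
    (P : EuclideanSpace ℝ (Fin n) → EuclideanSpace ℝ (Fin n) → ℝ)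
    (Q : EuclideanSpace ℝ (Fin n) →L[ℝ] EuclideanSpace ℝ (Fin n))
    (τ q : ℝ) (hτ : 0 < τ)
    (hg : ConvexOn ℝ Set.univ g)
    (hPconv : ∀ w, ConvexOn ℝ X (fun x => P x w))
    (hPdiff : ∀ w, Differentiable ℝ (fun x => P x w))
    (hgradcons : ∀ y ∈ X, gradient (fun x => P x y) y = gradient F y)
    (hQpd : ∀ z : EuclideanSpace ℝ (Fin n), q * ‖z‖ ^ 2 ≤ ⟪z, Q z⟫)
    (y : EuclideanSpace ℝ (Fin n)) (hy : y ∈ X)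
    (xhat : EuclideanSpace ℝ (Fin n)) (hxhatX : xhat ∈ X)
    (hmin : ∀ x ∈ X,
      P xhat y + τ / 2 * ⟪xhat - y, Q (xhat - y)⟫ + g xhat ≤
        P x y + τ / 2 * ⟪x - y, Q (x - y)⟫ + g x) :
    q * τ * ‖xhat - y‖ ^ 2 ≤ ⟪y - xhat, gradient F y⟫ + g y - g xhat := by
  have hdescent : τ * ⟪xhat - y, Q (xhat - y)⟫ ≤ (P y y + g y) - (P xhat y + g xhat) :=
    ((hPconv y).add (hg.subset (subset_univ X) hXcv)).mul_inner_le_sub_of_isMinOn_add_quadratic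
      (Q : EuclideanSpace ℝ (Fin n) →ₗ[ℝ] EuclideanSpace ℝ (Fin n)) τ hy hxhatX
      (isMinOn_iff.2 fun x hx => by
        simp only [Pi.add_apply, ContinuousLinearMap.coe_coe]
        linarith [hmin x hx])
  have hlinear : ⟪gradient F y, xhat - y⟫ ≤ P xhat y - P y y := by
    rw [← hgradcons y hy, inner_gradient_left]
    exact (hPconv y).fderiv_apply_sub_le hy hxhatX (hPdiff y y)
  have hcoercive : τ * (q * ‖xhat - y‖ ^ 2) ≤ τ * ⟪xhat - y, Q (xhat - y)⟫ :=
    mul_le_mul_of_nonneg_left (hQpd _) hτ.le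
  have hflip : ⟪y - xhat, gradient F y⟫ = -⟪gradient F y, xhat - y⟫ := by
    rw [real_inner_comm, ← inner_neg_right, neg_sub]
  linarith

/-- Descent property of the approximate best response with a general convex
surrogate `P(·;y)` (gradient consistent with `F`) and quadratic regularizer
built from a uniformly positive definite symmetric `Q`. -/
theorem stmt3 {n : ℕ} (X : Set (EuclideanSpace ℝ (Fin n)))
    (hXne : X.Nonempty) (hXcl : IsClosed X) (hXcv : Convex ℝ X)
    (F g : EuclideanSpace ℝ (Fin n) → ℝ)
    (P : EuclideanSpace ℝ (Fin n) → EuclideanSpace ℝ (Fin n) → ℝ)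
    (Q : EuclideanSpace ℝ (Fin n) →L[ℝ] EuclideanSpace ℝ (Fin n))
    (τ q : ℝ) (hτ : 0 < τ) (hq : 0 < q)
    (hF : Differentiable ℝ F)
    (hg : ConvexOn ℝ Set.univ g) (hgc : Continuous g)
    (hPconv : ∀ w, ConvexOn ℝ X (fun x => P x w))
    (hPdiff : ∀ w, Differentiable ℝ (fun x => P x w))
    (hgradcons : ∀ y ∈ X, gradient (fun x => P x y) y = gradient F y)
    (hQsym : ∀ z w : EuclideanSpace ℝ (Fin n), ⟪Q z, w⟫ = ⟪z, Q w⟫)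
    (hQpd : ∀ z : EuclideanSpace ℝ (Fin n), q * ‖z‖ ^ 2 ≤ ⟪z, Q z⟫)
    (y : EuclideanSpace ℝ (Fin n)) (hy : y ∈ X)
    (xhat : EuclideanSpace ℝ (Fin n)) (hxhatX : xhat ∈ X)
    (hmin : ∀ x ∈ X,
      P xhat y + τ / 2 * ⟪xhat - y, Q (xhat - y)⟫ + g xhat ≤
        P x y + τ / 2 * ⟪x - y, Q (x - y)⟫ + g x) :
    q * τ * ‖xhat - y‖ ^ 2 ≤ ⟪y - xhat, gradient F y⟫ + g y - g xhat :=
  stmt3_general X hXcv F g P Q τ q hτ hg hPconv hPdiff hgradcons hQpd y hy xhat hxhatX hmin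
end

section
/- Let H : ℝ^n × ℝ^n → ℝ be such that H(·;y) is strongly convex with uniform constant c > 0 and differentiable for each y, and ∇_x H(x;·) is Lipschitz in y with constant L uniformly in x. Let g be convex, and define x̂(y) = argmin_{x ∈ X} H(x;y) + g(x). Then x̂ is Lipschitz continuous on X with constant L/c: ‖x̂(y) - x̂(z)‖ ≤ (L/c)‖y - z‖. -/
/-!
Let `u = x̂(y)` and `v = x̂(z)`. Writing the first-order optimality conditions of the two
problems at each other's minimizers and adding them, the convex term `g` cancels and
`⟪u - v, ∇ₓH(u;y) - ∇ₓH(v;z)⟫ ≤ 0`. Strong monotonicity of `∇ₓH(·;y)` bounds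
`c‖u - v‖²` by `⟪u - v, ∇ₓH(u;y) - ∇ₓH(v;y)⟫`, which therefore is at most
`⟪u - v, ∇ₓH(v;z) - ∇ₓH(v;y)⟫ ≤ L‖u - v‖‖y - z‖`.
-/

open Set
open scoped RealInnerProductSpace

theorem sub_le_fderiv_of_isMinOn_add {E : Type*} [NormedAddCommGroup E] [NormedSpace ℝ E]
    {X : Set E} {F g : E → ℝ} {F' : StrongDual ℝ E} {u x : E}
    (hg : ConvexOn ℝ X g) (hF : HasFDerivAt F F' u) (hmin : IsMinOn (F + g) X u)
    (hu : u ∈ X) (hx : x ∈ X) :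
    g u - g x ≤ F' (x - u) := by
  -- `ψ` majorizes `(F + g) - g u` along the segment from `u` to `x`, with equality at `0`.
  set ψ : ℝ → ℝ := fun t => F (u + t • (x - u)) + t * (g x - g u)
  have hψ : HasDerivAt ψ (F' (x - u) + (g x - g u)) 0 := by
    have hline : HasDerivAt (fun t : ℝ => u + t • (x - u)) (x - u) 0 := by
      simpa using ((hasDerivAt_id (0 : ℝ)).smul_const (x - u)).const_add u
    have hF0 : HasFDerivAt F F' (u + (0 : ℝ) • (x - u)) := by simpa using hF
    exact (hF0.comp_hasDerivAt 0 hline).add (hasDerivAt_mul_const _)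
  have hψmin : IsMinOn ψ (Icc 0 1) 0 := by
    rintro t ⟨ht0, ht1⟩
    have hseg : u + t • (x - u) = (1 - t) • u + t • x := by module
    have hmem : (1 - t) • u + t • x ∈ X := hg.1 hu hx (by linarith) ht0 (by ring)
    have hgt : g ((1 - t) • u + t • x) ≤ (1 - t) * g u + t * g x :=
      hg.2 hu hx (by linarith) ht0 (by ring)
    have hmint : F u + g u ≤ F ((1 - t) • u + t • x) + g ((1 - t) • u + t • x) := hmin hmem
    simp only [mem_ofPred_eq, ψ, hseg, zero_smul, add_zero, zero_mul]
    linarith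
  have hcone : (1 : ℝ) ∈ posTangentConeAt (Icc 0 1) 0 := by
    simpa using sub_mem_posTangentConeAt_of_segment_subset (segment_eq_Icc zero_le_one).subset
  have hslope := hψmin.localize.hasFDerivWithinAt_nonneg hψ.hasFDerivAt.hasFDerivWithinAt hcone
  rw [ContinuousLinearMap.toSpanSingleton_apply, one_smul] at hslope
  linarith

theorem inner_sub_gradient_sub_nonpos_of_isMinOn_add {E : Type*} [NormedAddCommGroup E]
    [InnerProductSpace ℝ E] [CompleteSpace E] {X : Set E} {F₁ F₂ g : E → ℝ} {p q u v : E}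
    (hg : ConvexOn ℝ X g) (hF₁ : HasGradientAt F₁ p u) (hF₂ : HasGradientAt F₂ q v)
    (hu : IsMinOn (F₁ + g) X u) (hv : IsMinOn (F₂ + g) X v) (huX : u ∈ X) (hvX : v ∈ X) :
    ⟪u - v, p - q⟫ ≤ 0 := by
  have hu' : g u - g v ≤ ⟪p, v - u⟫ := by
    simpa using sub_le_fderiv_of_isMinOn_add hg hF₁.hasFDerivAt hu huX hvX
  have hv' : g v - g u ≤ ⟪q, u - v⟫ := by
    simpa using sub_le_fderiv_of_isMinOn_add hg hF₂.hasFDerivAt hv hvX huX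
  have hsum : ⟪u - v, p - q⟫ = -(⟪p, v - u⟫ + ⟪q, u - v⟫) := by
    simp only [inner_sub_right, real_inner_comm p, real_inner_comm q]
    ring
  linarith

theorem stmt4_general {n : ℕ} (X : Set (EuclideanSpace ℝ (Fin n)))
    (hXcv : Convex ℝ X)
    (H : EuclideanSpace ℝ (Fin n) → EuclideanSpace ℝ (Fin n) → ℝ)
    (gradH : EuclideanSpace ℝ (Fin n) → EuclideanSpace ℝ (Fin n) →
      EuclideanSpace ℝ (Fin n))
    (g : EuclideanSpace ℝ (Fin n) → ℝ) (c L : ℝ) (hc : 0 < c)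
    (hgrad : ∀ x, ∀ y ∈ X, HasGradientAt (fun x' => H x' y) (gradH x y) x)
    (hsm : ∀ y ∈ X, ∀ x ∈ X, ∀ w ∈ X,
      c * ‖x - w‖ ^ 2 ≤ ⟪x - w, gradH x y - gradH w y⟫)
    (hlip : ∀ x, ∀ y ∈ X, ∀ z ∈ X, ‖gradH x y - gradH x z‖ ≤ L * ‖y - z‖)
    (hg : ConvexOn ℝ Set.univ g)
    (xhat : EuclideanSpace ℝ (Fin n) → EuclideanSpace ℝ (Fin n))
    (hxhatX : ∀ y ∈ X, xhat y ∈ X)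
    (hmin : ∀ y ∈ X, ∀ x ∈ X, H (xhat y) y + g (xhat y) ≤ H x y + g x) :
    ∀ y ∈ X, ∀ z ∈ X, ‖xhat y - xhat z‖ ≤ L / c * ‖y - z‖ := by
  intro y hy z hz
  set u := xhat y
  set v := xhat z
  have hcross : ⟪u - v, gradH u y - gradH v z⟫ ≤ 0 :=
    inner_sub_gradient_sub_nonpos_of_isMinOn_add (hg.subset (subset_univ X) hXcv)
      (hgrad u y hy) (hgrad v z hz) (hmin y hy) (hmin z hz) (hxhatX y hy) (hxhatX z hz)
  have hpert : ⟪u - v, gradH v z - gradH v y⟫ ≤ ‖u - v‖ * (L * ‖y - z‖) :=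
    (real_inner_le_norm _ _).trans <| by
      gcongr
      rw [norm_sub_rev]
      exact hlip v y hy z hz
  have hkey : c * ‖u - v‖ ^ 2 ≤ ‖u - v‖ * (L * ‖y - z‖) :=
    calc c * ‖u - v‖ ^ 2 ≤ ⟪u - v, gradH u y - gradH v y⟫ :=
          hsm y hy u (hxhatX y hy) v (hxhatX z hz)
      _ = ⟪u - v, gradH u y - gradH v z⟫ + ⟪u - v, gradH v z - gradH v y⟫ := by
        rw [← inner_add_right, sub_add_sub_cancel]
      _ ≤ ‖u - v‖ * (L * ‖y - z‖) := by linarith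
  have hLyz : 0 ≤ L * ‖y - z‖ := (norm_nonneg _).trans (hlip u y hy z hz)
  rw [div_mul_eq_mul_div, le_div_iff₀ hc]
  nlinarith [norm_nonneg (u - v)]

/-- Lipschitz continuity of the best-response map: if `H(·;y)` is `c`-strongly
convex (strongly monotone gradient) uniformly in `y`, the partial gradient
`∇ₓH(x;·)` is `L`-Lipschitz uniformly in `x`, and `x̂(y)` minimizes
`H(·;y) + g` over `X`, then `‖x̂(y) - x̂(z)‖ ≤ (L/c)‖y - z‖`. -/
theorem stmt4 {n : ℕ} (X : Set (EuclideanSpace ℝ (Fin n)))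
    (hXne : X.Nonempty) (hXcl : IsClosed X) (hXcv : Convex ℝ X)
    (H : EuclideanSpace ℝ (Fin n) → EuclideanSpace ℝ (Fin n) → ℝ)
    (gradH : EuclideanSpace ℝ (Fin n) → EuclideanSpace ℝ (Fin n) →
      EuclideanSpace ℝ (Fin n))
    (g : EuclideanSpace ℝ (Fin n) → ℝ) (c L : ℝ) (hc : 0 < c) (hL : 0 ≤ L)
    (hgrad : ∀ x, ∀ y ∈ X, HasGradientAt (fun x' => H x' y) (gradH x y) x)
    (hsm : ∀ y ∈ X, ∀ x ∈ X, ∀ w ∈ X,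
      c * ‖x - w‖ ^ 2 ≤ ⟪x - w, gradH x y - gradH w y⟫)
    (hlip : ∀ x, ∀ y ∈ X, ∀ z ∈ X, ‖gradH x y - gradH x z‖ ≤ L * ‖y - z‖)
    (hg : ConvexOn ℝ Set.univ g) (hgc : Continuous g)
    (xhat : EuclideanSpace ℝ (Fin n) → EuclideanSpace ℝ (Fin n))
    (hxhatX : ∀ y ∈ X, xhat y ∈ X)
    (hmin : ∀ y ∈ X, ∀ x ∈ X, H (xhat y) y + g (xhat y) ≤ H x y + g x) :
    ∀ y ∈ X, ∀ z ∈ X, ‖xhat y - xhat z‖ ≤ L / c * ‖y - z‖ :=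
  stmt4_general X hXcv H gradH g c L hc hgrad hsm hlip hg xhat hxhatX hmin
end

section
/- Let γ⁰ = 1 and γᵏ = γᵏ⁻¹(1 - θγᵏ⁻¹) for k ≥ 1, where θ ∈ (0,1). Then γᵏ ∈ (0,1] for all k, γᵏ is decreasing, γᵏ → 0, ∑ₖ γᵏ = +∞, and ∑ₖ (γᵏ)² < +∞. -/
/-!
The reciprocals obey `1/γᵏ⁺¹ = 1/γᵏ + θ/(1 - θγᵏ)`, and while `γᵏ ∈ (0,1]` the increment lies in
`[θ, θ/(1-θ)]`. Hence `1/γᵏ` grows linearly, between `1 + θk` and `1 + θk/(1-θ)`: this gives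
`γᵏ → 0` and, by comparison with the harmonic series, `∑ γᵏ = ∞`. Finally
`(γᵏ)² = (γᵏ - γᵏ⁺¹)/θ`, so the squares form a telescoping series with bounded partial sums.
-/

open Filter Finset

lemma Real.not_summable_inv_one_add_mul {c : ℝ} (hc : 0 ≤ c) :
    ¬ Summable fun k : ℕ => (1 + c * k)⁻¹ := by
  intro h
  have hshift : Summable fun k : ℕ => ((k + 1 : ℕ) : ℝ)⁻¹ := by
    refine (h.mul_left (1 + c)).of_nonneg_of_le (fun k => by positivity) fun k => ?_
    rw [← div_eq_mul_inv, le_div_iff₀ (by positivity), Nat.cast_succ,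
      inv_mul_le_iff₀ (by positivity)]
    nlinarith [mul_nonneg hc (Nat.cast_nonneg (α := ℝ) k)]
  exact Real.not_summable_natCast_inv ((summable_nat_add_iff 1).mp hshift)

lemma Real.summable_sub_succ_of_antitone {u : ℕ → ℝ} {b : ℝ} (hu : Antitone u)
    (hb : ∀ k, b ≤ u k) : Summable fun k => u k - u (k + 1) :=
  summable_of_sum_range_le (c := u 0 - b) (fun k => sub_nonneg.mpr (hu k.le_succ))
    fun n => by simp only [sum_range_sub', sub_le_sub_iff_left, hb]

lemma inv_mul_one_sub_mul {θ x : ℝ} (hx : x ≠ 0) (hθx : θ * x ≠ 1) :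
    (x * (1 - θ * x))⁻¹ = x⁻¹ + θ / (1 - θ * x) := by
  have : 1 - θ * x ≠ 0 := sub_ne_zero.mpr hθx.symm
  rw [inv_eq_one_div, inv_eq_one_div, div_add_div _ _ hx this]
  congr 1
  ring

namespace StepSize

variable {θ : ℝ} {γ : ℕ → ℝ}

lemma succ_le (hθ : 0 ≤ θ) (hrec : ∀ k, γ (k + 1) = γ k * (1 - θ * γ k)) (k : ℕ) :
    γ (k + 1) ≤ γ k := by
  rw [hrec]
  nlinarith [mul_nonneg hθ (sq_nonneg (γ k))]

lemma mem_Ioc (hθ : θ ∈ Set.Ioo 0 1) (h0 : γ 0 = 1)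
    (hrec : ∀ k, γ (k + 1) = γ k * (1 - θ * γ k)) (k : ℕ) : γ k ∈ Set.Ioc 0 1 := by
  induction k with
  | zero => simp [h0]
  | succ k ih =>
    obtain ⟨hpos, hle⟩ := ih
    refine ⟨?_, (succ_le hθ.1.le hrec k).trans hle⟩
    rw [hrec]
    exact mul_pos hpos (by nlinarith [hθ.2])

lemma sq_eq (hθ : θ ≠ 0) (hrec : ∀ k, γ (k + 1) = γ k * (1 - θ * γ k)) (k : ℕ) :
    γ k ^ 2 = (γ k - γ (k + 1)) / θ := by
  rw [hrec, eq_div_iff hθ]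
  ring

lemma inv_succ (hθ : θ ∈ Set.Ioo 0 1) (h0 : γ 0 = 1)
    (hrec : ∀ k, γ (k + 1) = γ k * (1 - θ * γ k)) (k : ℕ) :
    (γ (k + 1))⁻¹ = (γ k)⁻¹ + θ / (1 - θ * γ k) := by
  obtain ⟨hpos, hle⟩ := mem_Ioc hθ h0 hrec k
  rw [hrec, inv_mul_one_sub_mul hpos.ne' (by nlinarith [hθ.2])]

lemma one_add_mul_le_inv (hθ : θ ∈ Set.Ioo 0 1) (h0 : γ 0 = 1)
    (hrec : ∀ k, γ (k + 1) = γ k * (1 - θ * γ k)) (k : ℕ) : 1 + θ * k ≤ (γ k)⁻¹ := by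
  induction k with
  | zero => simp [h0]
  | succ k ih =>
    obtain ⟨hpos, hle⟩ := mem_Ioc hθ h0 hrec k
    have hincr : θ ≤ θ / (1 - θ * γ k) :=
      le_div_self hθ.1.le (by nlinarith [hθ.2]) (by nlinarith [hθ.1])
    rw [inv_succ hθ h0 hrec, Nat.cast_succ]
    linarith

lemma inv_le_one_add_mul (hθ : θ ∈ Set.Ioo 0 1) (h0 : γ 0 = 1)
    (hrec : ∀ k, γ (k + 1) = γ k * (1 - θ * γ k)) (k : ℕ) :
    (γ k)⁻¹ ≤ 1 + θ / (1 - θ) * k := by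
  induction k with
  | zero => simp [h0]
  | succ k ih =>
    obtain ⟨hpos, hle⟩ := mem_Ioc hθ h0 hrec k
    have hincr : θ / (1 - θ * γ k) ≤ θ / (1 - θ) :=
      div_le_div_of_nonneg_left hθ.1.le (by linarith [hθ.2]) (by nlinarith [hθ.1])
    rw [inv_succ hθ h0 hrec, Nat.cast_succ]
    linarith

end StepSize

open StepSize in
/-- Properties of the diminishing step-size rule
`γ⁰ = 1`, `γᵏ⁺¹ = γᵏ(1 - θγᵏ)` with `θ ∈ (0,1)`. -/
theorem stmt7 (θ : ℝ) (hθ : θ ∈ Set.Ioo (0 : ℝ) 1) (γ : ℕ → ℝ)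
    (h0 : γ 0 = 1) (hrec : ∀ k, γ (k + 1) = γ k * (1 - θ * γ k)) :
    (∀ k, γ k ∈ Set.Ioc (0 : ℝ) 1) ∧
    (∀ k, γ (k + 1) ≤ γ k) ∧
    Filter.Tendsto γ Filter.atTop (nhds 0) ∧
    ¬ Summable γ ∧
    Summable (fun k => (γ k) ^ 2) := by
  have hmem := mem_Ioc hθ h0 hrec
  have hanti : Antitone γ := antitone_nat_of_succ_le (succ_le hθ.1.le hrec)
  refine ⟨hmem, succ_le hθ.1.le hrec, ?_, fun hsum => ?_, ?_⟩
  · have hinv : Tendsto (fun k => (γ k)⁻¹) atTop atTop :=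
      tendsto_atTop_mono (one_add_mul_le_inv hθ h0 hrec)
        (tendsto_atTop_add_const_left _ 1
          (tendsto_natCast_atTop_atTop.const_mul_atTop hθ.1))
    exact hinv.inv_tendsto_atTop.congr fun k => inv_inv (γ k)
  · have hc : 0 ≤ θ / (1 - θ) := div_nonneg hθ.1.le (sub_nonneg.mpr hθ.2.le)
    refine Real.not_summable_inv_one_add_mul hc (hsum.of_nonneg_of_le
      (fun k => inv_nonneg.mpr (by positivity)) fun k => ?_)
    exact inv_le_of_inv_le₀ (hmem k).1 (inv_le_one_add_mul hθ h0 hrec k)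
  · exact ((Real.summable_sub_succ_of_antitone hanti fun k => (hmem k).1.le).div_const θ).congr
      fun k => (sq_eq hθ.1.ne' hrec k).symm
end
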